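/- Let Γ be a smooth orientable hypersurface in ℝ^N with unit normal field ν extended to a tubular neighborhood, and let ψ:ℝ^N\{0}→(0,∞) be smooth, positively 1-homogeneous and convex. Then on Γ the normal derivative of the anisotropic mean curvature satisfies ∂_ν H^ψ = − trace(B^ψ B) = − trace(B²(∇²ψ∘ν)), where H^ψ = div(∇ψ∘ν), B^ψ = ∇(∇ψ∘ν), and B = ∇ν. -/

import Mathlib

/-!
Write `gᵢ = ∂ᵢψ ∘ ν`, so that `H^ψ = ∑ᵢ ∂ᵢgᵢ` and, by the chain rule, `∇gᵢ = ∇²ψ(ν) ∇ν`.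
Since `∇ν[ν] = 0`, each `∇gᵢ[ν]` vanishes identically near `Γ`; differentiating this identity
along `eᵢ` and using the symmetry of `∇²gᵢ` gives `∂_ν ∂ᵢgᵢ = -∇gᵢ[∂ᵢν]`, and summing over `i`
yields `∂_ν H^ψ = -trace(B^ψ B)`. The second identity is `B^ψ = ∇²ψ(ν) B` together with
`trace(∇²ψ(ν) B B) = trace(B² ∇²ψ(ν))`.
-/

open MeasureTheory Filter Topology

noncomputable section

namespace AnisoCurvature

/-- first partial derivatives of a scalar field on `ℝ^N`. -/
def pd (N : ℕ) (f : (Fin N → ℝ) → ℝ) (z : Fin N → ℝ) (j : Fin N) : ℝ :=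
  fderiv ℝ f z (Pi.single j 1)

/-- components of `∇ψ ∘ ν`. -/
def gpsnu (N : ℕ) (ψ : (Fin N → ℝ) → ℝ) (νf : (Fin N → ℝ) → Fin N → ℝ)
    (z : Fin N → ℝ) (i : Fin N) : ℝ :=
  fderiv ℝ ψ (νf z) (Pi.single i 1)

/-- the second fundamental form `B = ∇ν`. -/
def B (N : ℕ) (νf : (Fin N → ℝ) → Fin N → ℝ) (z : Fin N → ℝ) (i j : Fin N) : ℝ :=
  pd N (fun w => νf w i) z j

/-- the anisotropic second fundamental form `B^ψ = ∇(∇ψ∘ν)`. -/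
def Bpsi (N : ℕ) (ψ : (Fin N → ℝ) → ℝ) (νf : (Fin N → ℝ) → Fin N → ℝ)
    (z : Fin N → ℝ) (i j : Fin N) : ℝ :=
  pd N (fun w => gpsnu N ψ νf w i) z j

/-- the anisotropic mean curvature `H^ψ = div(∇ψ∘ν) = trace B^ψ`. -/
def Hpsi (N : ℕ) (ψ : (Fin N → ℝ) → ℝ) (νf : (Fin N → ℝ) → Fin N → ℝ)
    (z : Fin N → ℝ) : ℝ :=
  ∑ i, Bpsi N ψ νf z i i

/-- the Hessian matrix `∇²ψ(ν)`. -/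
def Hess (N : ℕ) (ψ : (Fin N → ℝ) → ℝ) (v : Fin N → ℝ) (i j : Fin N) : ℝ :=
  fderiv ℝ (fderiv ℝ ψ) v (Pi.single i 1) (Pi.single j 1)

section Calculus

variable {𝕜 : Type*} [NontriviallyNormedField 𝕜]
  {E F G : Type*} [NormedAddCommGroup E] [NormedSpace 𝕜 E] [NormedAddCommGroup F]
  [NormedSpace 𝕜 F] [NormedAddCommGroup G] [NormedSpace 𝕜 G]

theorem map_eq_sum_smul_single {R M ι L : Type*} [Semiring R] [AddCommMonoid M] [Module R M]
    [Fintype ι] [DecidableEq ι] [FunLike L (ι → R) M] [LinearMapClass L R (ι → R) M]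
    (f : L) (u : ι → R) : f u = ∑ j, u j • f (Pi.single j 1) := by
  conv_lhs => rw [← Finset.univ_sum_single u]
  refine (map_sum f _ _).trans (Finset.sum_congr rfl fun j _ => ?_)
  rw [← map_smul, ← Pi.single_smul', smul_eq_mul, mul_one]

theorem fderiv_apply_const_apply {L : E → F →L[𝕜] G} {z : E} (hL : DifferentiableAt 𝕜 L z)
    (e : F) (v : E) : fderiv 𝕜 (fun w => L w e) z v = fderiv 𝕜 L z v e := by
  simp [fderiv_clm_apply hL (differentiableAt_const e)]

theorem fderiv_fderiv_comp_apply {ψ : F → G} {ν : E → F} {w : E}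
    (hψ : DifferentiableAt 𝕜 (fderiv 𝕜 ψ) (ν w)) (hν : DifferentiableAt 𝕜 ν w) (e : F) (v : E) :
    fderiv 𝕜 (fun w => fderiv 𝕜 ψ (ν w) e) w v =
      fderiv 𝕜 (fderiv 𝕜 ψ) (ν w) (fderiv 𝕜 ν w v) e := by
  rw [fderiv_apply_const_apply (L := fun w => fderiv 𝕜 ψ (ν w)) (hψ.comp w hν),
    fderiv_fun_comp w hψ hν]
  rfl

/-- Differentiating `f' w (X w) = 0` along `v` and using the symmetry of `f''`. -/
theorem fderiv_fderiv_apply_eq_neg_of_eventually_eq_zero {f : E → G} {X : E → E} {z : E}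
    (hf : DifferentiableAt 𝕜 (fderiv 𝕜 f) z) (hsymm : IsSymmSndFDerivAt 𝕜 f z)
    (hX : DifferentiableAt 𝕜 X z) (h0 : (fun w => fderiv 𝕜 f w (X w)) =ᶠ[𝓝 z] 0) (v : E) :
    fderiv 𝕜 (fderiv 𝕜 f) z (X z) v = - fderiv 𝕜 f z (fderiv 𝕜 X z v) := by
  have hderiv := fderiv_clm_apply hf hX
  rw [h0.fderiv_eq, fderiv_zero, Pi.zero_apply] at hderiv
  have := congrArg (fun L : E →L[𝕜] G => L v) hderiv
  simp only [zero_apply, add_apply, ContinuousLinearMap.comp_apply,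
    ContinuousLinearMap.flip_apply] at this
  rw [hsymm (X z) v, eq_neg_iff_add_eq_zero, add_comm, ← this]

end Calculus

section Curvature

variable {N : ℕ} {νf : (Fin N → ℝ) → Fin N → ℝ} {ψ : (Fin N → ℝ) → ℝ} {z : Fin N → ℝ}

theorem B_eq_fderiv_apply (hν : DifferentiableAt ℝ νf z) (i j : Fin N) :
    B N νf z i j = fderiv ℝ νf z (Pi.single j 1) i := by
  rw [B, pd, fderiv_apply hν]
  rfl

theorem fderiv_gpsnu_apply (hψ : DifferentiableAt ℝ (fderiv ℝ ψ) (νf z))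
    (hν : DifferentiableAt ℝ νf z) (i : Fin N) (v : Fin N → ℝ) :
    fderiv ℝ (fun w => gpsnu N ψ νf w i) z v =
      fderiv ℝ (fderiv ℝ ψ) (νf z) (fderiv ℝ νf z v) (Pi.single i 1) :=
  fderiv_fderiv_comp_apply hψ hν _ v

theorem of_Bpsi_eq_Hess_transpose_mul_B (hψ : DifferentiableAt ℝ (fderiv ℝ ψ) (νf z))
    (hν : DifferentiableAt ℝ νf z) :
    Matrix.of (Bpsi N ψ νf z) =
      (Matrix.of (Hess N ψ (νf z))).transpose * Matrix.of (B N νf z) := by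
  ext i j
  rw [Matrix.of_apply, Bpsi, pd, fderiv_gpsnu_apply hψ hν,
    map_eq_sum_smul_single (fderiv ℝ (fderiv ℝ ψ) (νf z)), Matrix.mul_apply]
  simp [B_eq_fderiv_apply hν, Hess, mul_comm]

theorem isSymm_of_Hess {v : Fin N → ℝ} (hψ : ContDiffAt ℝ 2 ψ v) :
    (Matrix.of (Hess N ψ v)).IsSymm :=
  Matrix.IsSymm.ext fun i j => hψ.isSymmSndFDerivAt (by simp) _ _

theorem sum_Bpsi_mul_B_eq_sum_B_mul_B_mul_Hess (hψ : ContDiffAt ℝ 2 ψ (νf z))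
    (hν : DifferentiableAt ℝ νf z) :
    ∑ i, ∑ j, Bpsi N ψ νf z i j * B N νf z j i =
      ∑ i, ∑ j, ∑ k, B N νf z i j * B N νf z j k * Hess N ψ (νf z) k i := by
  set Bm := Matrix.of (B N νf z)
  set H := Matrix.of (Hess N ψ (νf z))
  have hBpsi : Matrix.of (Bpsi N ψ νf z) = H * Bm := by
    rw [of_Bpsi_eq_Hess_transpose_mul_B
      ((hψ.fderiv_right (m := 1) le_rfl).differentiableAt one_ne_zero) hν, (isSymm_of_Hess hψ).eq]
  calc ∑ i, ∑ j, Bpsi N ψ νf z i j * B N νf z j i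
        = (Matrix.of (Bpsi N ψ νf z) * Bm).trace := by
        simp [Bm, Matrix.trace, Matrix.mul_apply]
    _ = (Bm * Bm * H).trace := by rw [hBpsi, Matrix.mul_assoc, Matrix.trace_mul_comm]
    _ = ∑ i, ∑ j, ∑ k, B N νf z i j * B N νf z j k * Hess N ψ (νf z) k i := by
        simp only [Matrix.trace, Matrix.diag, Matrix.mul_apply, Finset.sum_mul, Bm, H,
          Matrix.of_apply]
        exact Finset.sum_congr rfl fun i _ => Finset.sum_comm

theorem fderiv_Hpsi_normal_eq_neg_sum {U : Set (Fin N → ℝ)} (hU : IsOpen U) (hz : z ∈ U)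
    (hν : ∀ w ∈ U, ContDiffAt ℝ 2 νf w) (hψ : ∀ w ∈ U, ContDiffAt ℝ 3 ψ (νf w))
    (hext : ∀ w ∈ U, fderiv ℝ νf w (νf w) = 0) :
    fderiv ℝ (Hpsi N ψ νf) z (νf z) = - ∑ i, ∑ j, Bpsi N ψ νf z i j * B N νf z j i := by
  set g := fun i w => gpsnu N ψ νf w i
  have hψ' : ∀ w ∈ U, DifferentiableAt ℝ (fderiv ℝ ψ) (νf w) := fun w hw =>
    ((hψ w hw).fderiv_right (m := 2) le_rfl).differentiableAt two_ne_zero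
  have hg : ∀ i, ContDiffAt ℝ 2 (g i) z := fun i =>
    (((hψ z hz).fderiv_right (m := 2) le_rfl).comp z (hν z hz)).clm_apply contDiffAt_const
  have hg' : ∀ i, DifferentiableAt ℝ (fderiv ℝ (g i)) z := fun i =>
    ((hg i).fderiv_right (m := 1) le_rfl).differentiableAt one_ne_zero
  have hnormal : ∀ i, (fun w => fderiv ℝ (g i) w (νf w)) =ᶠ[𝓝 z] 0 := fun i => by
    filter_upwards [hU.mem_nhds hz] with w hw
    rw [fderiv_gpsnu_apply (hψ' w hw) ((hν w hw).differentiableAt two_ne_zero), hext w hw]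
    simp
  have hterm : ∀ i, fderiv ℝ (fun w => fderiv ℝ (g i) w (Pi.single i 1)) z (νf z) =
      - ∑ j, Bpsi N ψ νf z i j * B N νf z j i := fun i => by
    rw [fderiv_apply_const_apply (hg' i),
      fderiv_fderiv_apply_eq_neg_of_eventually_eq_zero (hg' i)
        ((hg i).isSymmSndFDerivAt (by simp)) ((hν z hz).differentiableAt two_ne_zero) (hnormal i),
      map_eq_sum_smul_single (fderiv ℝ (g i) z)]
    simp [B_eq_fderiv_apply ((hν z hz).differentiableAt two_ne_zero), Bpsi, pd, g, mul_comm]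
  change fderiv ℝ (fun w => ∑ i, fderiv ℝ (g i) w (Pi.single i 1)) z (νf z) = _
  rw [fderiv_fun_sum fun i _ => (hg' i).clm_apply (differentiableAt_const _), sum_apply]
  simp [hterm]

end Curvature

theorem normal_derivative_of_anisotropic_mean_curvature_general
    (N : ℕ) (U : Set (Fin N → ℝ)) (hU : IsOpen U)
    (νf : (Fin N → ℝ) → Fin N → ℝ)
    (hν : ContDiffOn ℝ 2 νf U)
    (hunit : ∀ w ∈ U, (∑ i, (νf w i)^2) = 1)
    (hext : ∀ w ∈ U, fderiv ℝ νf w (νf w) = 0)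
    (ψ : (Fin N → ℝ) → ℝ)
    (hψ : ContDiffOn ℝ 3 ψ {(0 : Fin N → ℝ)}ᶜ) :
    ∀ z ∈ U,
      fderiv ℝ (Hpsi N ψ νf) z (νf z)
          = - ∑ i, ∑ j, Bpsi N ψ νf z i j * B N νf z j i ∧
      (∑ i, ∑ j, Bpsi N ψ νf z i j * B N νf z j i)
          = ∑ i, ∑ j, ∑ k, B N νf z i j * B N νf z j k * Hess N ψ (νf z) k i := by
  intro z hz
  have hνU : ∀ w ∈ U, ContDiffAt ℝ 2 νf w := fun w hw => hν.contDiffAt (hU.mem_nhds hw)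
  have hψU : ∀ w ∈ U, ContDiffAt ℝ 3 ψ (νf w) := fun w hw =>
    hψ.contDiffAt <| isOpen_compl_singleton.mem_nhds fun h0 => by
      simpa [show νf w = 0 from h0] using hunit w hw
  exact ⟨fderiv_Hpsi_normal_eq_neg_sum hU hz hνU hψU hext,
    sum_Bpsi_mul_B_eq_sum_B_mul_B_mul_Hess ((hψU z hz).of_le (by norm_num))
      ((hνU z hz).differentiableAt two_ne_zero)⟩

/-- Lemma `lem:identita`(a): for a smooth unit normal field `ν`
extended to a tubular neighborhood (so that `∇ν[ν] = 0`) and a smooth positively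
`1`-homogeneous convex anisotropy `ψ`, one has
`∂_ν H^ψ = -trace(B^ψ B) = -trace(B²(∇²ψ∘ν))`. -/
theorem normal_derivative_of_anisotropic_mean_curvature
    (N : ℕ) (U : Set (Fin N → ℝ)) (hU : IsOpen U)
    (νf : (Fin N → ℝ) → Fin N → ℝ)
    (hν : ContDiffOn ℝ 2 νf U)
    (hunit : ∀ w ∈ U, (∑ i, (νf w i)^2) = 1)
    (hext : ∀ w ∈ U, fderiv ℝ νf w (νf w) = 0)
    (ψ : (Fin N → ℝ) → ℝ)
    (hψ : ContDiffOn ℝ 3 ψ {(0 : Fin N → ℝ)}ᶜ)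
    (hψpos : ∀ v : Fin N → ℝ, v ≠ 0 → 0 < ψ v)
    (hhom : ∀ (t : ℝ) (v : Fin N → ℝ), 0 < t → ψ (t • v) = t * ψ v)
    (hconv : ConvexOn ℝ Set.univ ψ) :
    ∀ z ∈ U,
      fderiv ℝ (Hpsi N ψ νf) z (νf z)
          = - ∑ i, ∑ j, Bpsi N ψ νf z i j * B N νf z j i ∧
      (∑ i, ∑ j, Bpsi N ψ νf z i j * B N νf z j i)
          = ∑ i, ∑ j, ∑ k, B N νf z i j * B N νf z j k * Hess N ψ (νf z) k i :=
  normal_derivative_of_anisotropic_mean_curvature_general N U hU νf hν hunit hext ψ hψ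

end AnisoCurvature
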